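/- arXiv:2111.03834 — 3 statements merged into one kernel-verified Lean document; each statement's English description precedes it below -/
import Mathlib

section
/- For real α with 0 < α < 1 or α ∈ ℤ, real c with 0 < c < 1, and complex s with Re(s) > 1, one has the absolutely convergent expansion ζ(α, c, s) = c^{-s} + e^{2πiα} Σ_{n≥0} (-c)^n · binom(s+n-1, n) · ζ(α, 1, s+n), where binom(s+n-1,n) = (s)(s+1)⋯(s+n-1)/n!. -/
open Complex Real Finset

/-- The Lerch zeta series for `Re s > 1`. -/
noncomputable def lerchSeries (α c : ℝ) (s : ℂ) : ℂ :=
    ∑' n : ℕ, Complex.exp (2 * π * I * n * α) / ((n : ℂ) + c) ^ s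

/-- Generalized binomial coefficient `binom (s+n-1) n = s(s+1)⋯(s+n-1)/n!`. -/
noncomputable def ascBinom (s : ℂ) (n : ℕ) : ℂ :=
    (∏ j ∈ Finset.range n, (s + j)) / (n.factorial : ℂ)


lemma norm_lerch_term (α c : ℝ) (hc : 0 < c) (s : ℂ) (n : ℕ) :
    ‖Complex.exp (2 * π * I * n * α) / ((n : ℂ) + c) ^ s‖ = ((n : ℝ) + c) ^ (-s.re) := by
  have h1 : ‖Complex.exp (2 * π * I * (n : ℂ) * α)‖ = 1 := by
    rw [Complex.norm_exp]
    have : (2 * π * I * (n : ℂ) * α).re = 0 := by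
      simp [Complex.mul_re, Complex.mul_im]
    rw [this, Real.exp_zero]
  have h2 : ((n : ℂ) + c) = ((n + c : ℝ) : ℂ) := by push_cast; ring
  rw [norm_div, h1, h2,
    Complex.norm_cpow_eq_rpow_re_of_pos (by positivity), one_div,
    ← Real.rpow_neg (by positivity)]

lemma lerch_abs_summable (c : ℝ) (hc : 0 < c) {p : ℝ} (hp : 1 < p) :
    Summable (fun n : ℕ => ((n : ℝ) + c) ^ (-p)) := by
  have := (Real.summable_one_div_nat_add_rpow c p).mpr hp
  refine this.congr fun n => ?_
  rw [abs_of_pos (by positivity), one_div, ← Real.rpow_neg (by positivity)]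

lemma slit_aux (x : ℝ) {w : ℂ} (hw : w ∈ Metric.ball (0:ℂ) x) :
    (x : ℂ) + w ∈ Complex.slitPlane := by
  rw [Metric.mem_ball, dist_zero_right] at hw
  have h : |w.re| ≤ ‖w‖ := Complex.abs_re_le_norm w
  exact Complex.mem_slitPlane_iff.mpr (Or.inl (by
    simp only [Complex.add_re, Complex.ofReal_re]
    have := abs_lt.mp (h.trans_lt hw)
    linarith [this.1]))

lemma iteratedDeriv_cpow_aux (x : ℝ) (s : ℂ) (n : ℕ) :
    ∀ w : ℂ, w ∈ Metric.ball (0:ℂ) x →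
      iteratedDeriv n (fun z : ℂ => ((x:ℂ) + z) ^ (-s)) w
        = (∏ j ∈ Finset.range n, (-s - j)) * ((x:ℂ) + w) ^ (-s - n) := by
  induction n with
  | zero => intro w hw; simp
  | succ n ih =>
    intro w hw
    rw [iteratedDeriv_succ]
    have hmem : Metric.ball (0:ℂ) x ∈ nhds w := Metric.isOpen_ball.mem_nhds hw
    have hEq : iteratedDeriv n (fun z : ℂ => ((x:ℂ) + z) ^ (-s)) =ᶠ[nhds w]
        fun z => (∏ j ∈ Finset.range n, (-s - j)) * ((x:ℂ) + z) ^ (-s - n) :=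
      Filter.eventuallyEq_of_mem hmem ih
    rw [hEq.deriv_eq]
    have hslit := slit_aux x hw
    have hD : HasDerivAt (fun z : ℂ => ((x:ℂ) + z) ^ (-s - n))
        ((-s - n) * ((x:ℂ) + w) ^ (-s - n - 1) * 1) w :=
      HasDerivAt.cpow_const ((hasDerivAt_id w).const_add (x:ℂ)) hslit
    rw [deriv_const_mul _ hD.differentiableAt, hD.deriv,
      Finset.prod_range_succ,
      show (-s - (n:ℂ) - 1) = -s - (((n+1:ℕ)) : ℂ) by push_cast; ring]
    ring

lemma hasSum_binomial (x c : ℝ) (hx : 0 < x) (hc : 0 < c) (hcx : c < x) (s : ℂ) :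
    HasSum (fun n : ℕ => (-c : ℂ) ^ n * ascBinom s n * (x : ℂ) ^ (-(s + n)))
      (((x : ℂ) + c) ^ (-s)) := by
  have hdiff : DifferentiableOn ℂ (fun z : ℂ => ((x:ℂ) + z) ^ (-s)) (Metric.ball 0 x) := by
    intro w hw
    exact ((differentiableAt_id.const_add _).cpow (differentiableAt_const _)
      (slit_aux x hw)).differentiableWithinAt
  have hz : (c : ℂ) ∈ Metric.ball (0:ℂ) x := by
    rw [Metric.mem_ball, dist_zero_right, Complex.norm_real, Real.norm_eq_abs,
      abs_of_pos hc]
    exact hcx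
  have H := Complex.hasSum_taylorSeries_on_ball hdiff hz
  simp only [sub_zero] at H
  convert H using 2 with n
  · rfl
  rw [iteratedDeriv_cpow_aux x s n 0 (by simpa using hx)]
  have hprod : (∏ j ∈ Finset.range n, (-s - (j:ℂ))) =
      (-1 : ℂ) ^ n * ∏ j ∈ Finset.range n, (s + j) := by
    calc ∏ j ∈ Finset.range n, (-s - (j:ℂ))
        = ∏ j ∈ Finset.range n, (-1 : ℂ) * (s + j) :=
          Finset.prod_congr rfl fun j _ => by ring
      _ = (-1 : ℂ) ^ n * ∏ j ∈ Finset.range n, (s + j) := by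
          rw [Finset.prod_mul_distrib, Finset.prod_const, Finset.card_range]
  rw [add_zero, hprod, ascBinom]
  rw [show (-(s + (n:ℂ))) = -s - n by ring]
  have hfac : ((n.factorial : ℂ)) ≠ 0 := Nat.cast_ne_zero.mpr n.factorial_ne_zero
  simp only [smul_eq_mul]
  field_simp
  ring

lemma ascBinom_succ (s : ℂ) (n : ℕ) :
    ascBinom s (n + 1) = ascBinom s n * ((s + n) / ((n : ℂ) + 1)) := by
  have h1 : ((n.factorial : ℂ)) ≠ 0 := Nat.cast_ne_zero.mpr n.factorial_ne_zero
  have h2 : ((n : ℂ) + 1) ≠ 0 := Nat.cast_add_one_ne_zero n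
  rw [ascBinom, ascBinom, Finset.prod_range_succ, Nat.factorial_succ,
    div_mul_div_comm, Nat.cast_mul, Nat.cast_add, Nat.cast_one,
    mul_comm ((n:ℂ) + 1)]

lemma ascBinom_ne_zero {s : ℂ} (hs : 0 < s.re) (n : ℕ) : ascBinom s n ≠ 0 := by
  rw [ascBinom, div_ne_zero_iff]
  refine ⟨Finset.prod_ne_zero_iff.mpr fun j _ => ?_,
    Nat.cast_ne_zero.mpr n.factorial_ne_zero⟩
  intro h
  have h0 : (s + (j:ℂ)).re = s.re + j := by simp
  rw [h, Complex.zero_re] at h0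
  have hj : (0:ℝ) ≤ (j:ℝ) := Nat.cast_nonneg j
  linarith

lemma summable_ascBinom (c : ℝ) (hc : 0 < c) (hc' : c < 1) {s : ℂ} (hs : 0 < s.re) :
    Summable (fun n : ℕ => c ^ n * ‖ascBinom s n‖) := by
  have hne : ∀ n : ℕ, c ^ n * ‖ascBinom s n‖ ≠ 0 := fun n =>
    mul_ne_zero (pow_ne_zero n hc.ne') (norm_ne_zero_iff.mpr (ascBinom_ne_zero hs n))
  refine summable_of_ratio_test_tendsto_lt_one hc' (Filter.Eventually.of_forall hne) ?_
  have key : ∀ n : ℕ, ‖c ^ (n+1) * ‖ascBinom s (n+1)‖‖ / ‖c ^ n * ‖ascBinom s n‖‖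
      = c * ‖(s + n) / ((n : ℂ) + 1)‖ := by
    intro n
    have h1 : (0:ℝ) < c ^ n * ‖ascBinom s n‖ :=
      mul_pos (pow_pos hc n) (norm_pos_iff.mpr (ascBinom_ne_zero hs n))
    rw [Real.norm_eq_abs, Real.norm_eq_abs, abs_of_pos h1, abs_of_pos
      (mul_pos (pow_pos hc (n+1)) (norm_pos_iff.mpr (ascBinom_ne_zero hs (n+1)))),
      ascBinom_succ, norm_mul, pow_succ,
      show c ^ n * c * (‖ascBinom s n‖ * ‖(s + (n:ℂ)) / ((n : ℂ) + 1)‖)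
        = (c ^ n * ‖ascBinom s n‖) * (c * ‖(s + (n:ℂ)) / ((n : ℂ) + 1)‖) from by ring,
      mul_div_cancel_left₀ _ h1.ne']
  simp only [key]
  have h0 : Filter.Tendsto (fun n : ℕ => ((n : ℂ) + 1)⁻¹) Filter.atTop (nhds 0) := by
    have := tendsto_one_div_add_atTop_nhds_zero_nat (𝕜 := ℝ)
    have h := (Complex.continuous_ofReal.tendsto 0).comp this
    rw [Complex.ofReal_zero] at h
    refine h.congr fun n => ?_
    simp only [Function.comp_apply]
    push_cast
    rw [one_div]
  have h2 : Filter.Tendsto (fun n : ℕ => (s + n) / ((n : ℂ) + 1)) Filter.atTop (nhds 1) := by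
    have : Filter.Tendsto (fun n : ℕ => (s - 1) * ((n : ℂ) + 1)⁻¹ + 1) Filter.atTop
        (nhds ((s - 1) * 0 + 1)) := ((h0.const_mul (s - 1)).add_const 1)
    simp only [mul_zero, zero_add] at this
    refine this.congr fun n => ?_
    have hn : ((n : ℂ) + 1) ≠ 0 := Nat.cast_add_one_ne_zero n
    field_simp
    ring
  have h3 : Filter.Tendsto (fun n : ℕ => ‖(s + n) / ((n : ℂ) + 1)‖) Filter.atTop (nhds 1) := by
    have := h2.norm
    rwa [norm_one] at this
  have := h3.const_mul c
  rwa [mul_one] at this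

lemma norm_cexp_eq_one (α : ℝ) (k : ℕ) : ‖Complex.exp (2 * π * I * (k : ℂ) * α)‖ = 1 := by
  rw [Complex.norm_exp]
  have : (2 * π * I * (k : ℂ) * α).re = 0 := by simp [Complex.mul_re, Complex.mul_im]
  rw [this, Real.exp_zero]

lemma norm_cpow_nat (s : ℂ) (k : ℕ) : ‖((k:ℂ) + 1) ^ (-s)‖ = ((k:ℝ) + 1) ^ (-s.re) := by
  have h2 : ((k : ℂ) + 1) = (((k:ℝ) + 1 : ℝ) : ℂ) := by push_cast; ring
  rw [h2, Complex.norm_cpow_eq_rpow_re_of_pos (by positivity)]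
  simp

/-- Taylor expansion of the Lerch zeta function in the `c`-variable: for `0 < α < 1` or
`α ∈ ℤ`, `0 < c < 1` and `Re s > 1`,
`ζ(α,c,s) = c^{-s} + e(α) ∑_{n≥0} (-c)^n binom(s+n-1,n) ζ(α,1,s+n)`,
the series converging absolutely. -/
theorem lerchZeta_taylor_expansion (α c : ℝ) (hα : (0 < α ∧ α < 1) ∨ ∃ k : ℤ, α = k)
    (hc : 0 < c) (hc' : c < 1) (s : ℂ) (hs : 1 < s.re) :
    Summable (fun n : ℕ =>
      ‖((-c : ℂ)) ^ n * ascBinom s n * lerchSeries α 1 (s + n)‖) ∧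
    lerchSeries α c s = (c : ℂ) ^ (-s) +
      Complex.exp (2 * π * I * α) *
        ∑' n : ℕ, ((-c : ℂ)) ^ n * ascBinom s n * lerchSeries α 1 (s + n) := by

  have hsre : ∀ n : ℕ, 1 < (s + n).re := fun n => by
    have : (0:ℝ) ≤ (n:ℝ) := Nat.cast_nonneg n
    simp only [Complex.add_re, Complex.natCast_re]
    linarith
  -- summability of the c = 1 shifted Lerch series
  have hsum1 : ∀ n : ℕ, Summable (fun k : ℕ =>
      Complex.exp (2 * π * I * (k:ℂ) * α) / ((k : ℂ) + ((1:ℝ):ℂ)) ^ (s + n)) := fun n =>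
    Summable.of_norm <| by
      simp only [norm_lerch_term α 1 one_pos (s + n)]
      exact lerch_abs_summable 1 one_pos (hsre n)
  have hZs : Summable (fun k : ℕ => ((k:ℝ) + 1) ^ (-s.re)) := lerch_abs_summable 1 one_pos hs
  set Z : ℝ := ∑' k : ℕ, ((k:ℝ) + 1) ^ (-s.re) with hZ
  have hone : ∀ k : ℕ, (1:ℝ) ≤ (k:ℝ) + 1 := fun k => by
    have : (0:ℝ) ≤ (k:ℝ) := Nat.cast_nonneg k; linarith
  have hbound : ∀ n k : ℕ, ((k:ℝ) + 1) ^ (-(s + n).re) ≤ ((k:ℝ) + 1) ^ (-s.re) := by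
    intro n k
    refine Real.rpow_le_rpow_of_exponent_le (hone k) ?_
    have : (0:ℝ) ≤ (n:ℝ) := Nat.cast_nonneg n
    simp only [Complex.add_re, Complex.natCast_re]
    linarith
  have hsum1' : ∀ n : ℕ, Summable (fun k : ℕ => ((k:ℝ) + 1) ^ (-(s + n).re)) := fun n =>
    lerch_abs_summable 1 one_pos (hsre n)
  have hnormlerch : ∀ n : ℕ, ‖lerchSeries α 1 (s + n)‖ ≤ Z := by
    intro n
    rw [lerchSeries]
    refine (norm_tsum_le_tsum_norm ?_).trans ?_
    · simp only [norm_lerch_term α 1 one_pos (s + n)]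
      exact hsum1' n
    · simp only [norm_lerch_term α 1 one_pos (s + n)]
      exact Summable.tsum_le_tsum (hbound n) (hsum1' n) hZs
  have hs0 : 0 < s.re := lt_trans one_pos hs
  have hascB := summable_ascBinom c hc hc' hs0
  have hnormterm : ∀ n : ℕ, ‖(-c : ℂ) ^ n‖ = c ^ n := fun n => by
    rw [norm_pow, norm_neg, Complex.norm_real, Real.norm_eq_abs, abs_of_pos hc]
  -- first conjunct
  have hZnonneg : 0 ≤ Z := tsum_nonneg fun k => Real.rpow_nonneg (by positivity) _
  have conj1 : Summable (fun n : ℕ =>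
      ‖((-c : ℂ)) ^ n * ascBinom s n * lerchSeries α 1 (s + n)‖) := by
    refine Summable.of_nonneg_of_le (fun n => norm_nonneg _) (fun n => ?_)
      (hascB.mul_right Z)
    rw [norm_mul, norm_mul, hnormterm]
    calc c ^ n * ‖ascBinom s n‖ * ‖lerchSeries α 1 (s + n)‖
        ≤ c ^ n * ‖ascBinom s n‖ * Z := by
          refine mul_le_mul_of_nonneg_left (hnormlerch n) (by positivity)
      _ = c ^ n * ‖ascBinom s n‖ * Z := rfl
  refine ⟨conj1, ?_⟩
  -- the double family
  set F : ℕ → ℕ → ℂ := fun n k =>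
    Complex.exp (2 * π * I * (k:ℂ) * α) *
      ((-c : ℂ) ^ n * ascBinom s n * ((k : ℂ) + 1) ^ (-(s + n))) with hF
  have hFnorm : ∀ n k : ℕ, ‖F n k‖ = c ^ n * ‖ascBinom s n‖ * ((k:ℝ) + 1) ^ (-(s + n).re) := by
    intro n k
    rw [hF]
    simp only []
    rw [norm_mul, norm_cexp_eq_one, one_mul, norm_mul, norm_mul, hnormterm, norm_cpow_nat]
  have hFsummable : Summable (Function.uncurry F) := by
    refine Summable.of_norm ?_
    have h0 : (0 : ℕ × ℕ → ℝ) ≤ fun p : ℕ × ℕ => ‖Function.uncurry F p‖ :=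
      fun p => norm_nonneg _
    rw [summable_prod_of_nonneg h0]
    constructor
    · intro n
      simp only [Function.uncurry, hFnorm]
      exact (hsum1' n).mul_left _
    · simp only [Function.uncurry, hFnorm]
      refine Summable.of_nonneg_of_le (fun n => tsum_nonneg fun k => by positivity)
        (fun n => ?_) (hascB.mul_right Z)
      rw [tsum_mul_left]
      refine mul_le_mul_of_nonneg_left ?_ (by positivity)
      exact Summable.tsum_le_tsum (hbound n) (hsum1' n) hZs
  -- row sums (fixed k, sum over n)
  have hrow : ∀ k : ℕ, HasSum (fun n => F n k)
      (Complex.exp (2 * π * I * (k:ℂ) * α) * (((k:ℂ) + 1) + c) ^ (-s)) := by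
    intro k
    have hx : (0:ℝ) < (k:ℝ) + 1 := by positivity
    have hb := hasSum_binomial ((k:ℝ) + 1) c hx hc (lt_of_lt_of_le hc' (hone k)) s
    have hcast : ((((k:ℝ) + 1 : ℝ)) : ℂ) = (k:ℂ) + 1 := by push_cast; ring
    rw [hcast] at hb
    exact hb.mul_left _
  -- column sums (fixed n, sum over k)
  have hcol : ∀ n : ℕ, HasSum (fun k => F n k)
      ((-c : ℂ) ^ n * ascBinom s n * lerchSeries α 1 (s + n)) := by
    intro n
    have h1 := (hsum1 n).hasSum
    have h2 := h1.mul_left ((-c : ℂ) ^ n * ascBinom s n)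
    refine h2.congr_fun fun k => ?_
    rw [hF]
    simp only [Complex.ofReal_one]
    rw [div_eq_mul_inv, ← Complex.cpow_neg]
    ring
  -- swap the double sum
  have hswap : ∑' k : ℕ, (Complex.exp (2 * π * I * (k:ℂ) * α) * (((k:ℂ) + 1) + c) ^ (-s))
      = ∑' n : ℕ, ((-c : ℂ) ^ n * ascBinom s n * lerchSeries α 1 (s + n)) := by
    calc ∑' k : ℕ, (Complex.exp (2 * π * I * (k:ℂ) * α) * (((k:ℂ) + 1) + c) ^ (-s))
        = ∑' (k : ℕ) (n : ℕ), F n k := tsum_congr fun k => (hrow k).tsum_eq.symm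
      _ = ∑' (n : ℕ) (k : ℕ), F n k := Summable.tsum_comm' hFsummable
          (fun n => (hcol n).summable) (fun k => (hrow k).summable)
      _ = ∑' n : ℕ, ((-c : ℂ) ^ n * ascBinom s n * lerchSeries α 1 (s + n)) :=
          tsum_congr fun n => (hcol n).tsum_eq
  -- summability of the original Lerch series at (α, c)
  have hsumc : Summable (fun m : ℕ =>
      Complex.exp (2 * π * I * (m:ℂ) * α) / ((m : ℂ) + (c:ℂ)) ^ s) :=
    Summable.of_norm <| by
      simp only [norm_lerch_term α c hc s]
      exact lerch_abs_summable c hc hs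
  -- split off the m = 0 term
  rw [lerchSeries, Summable.tsum_eq_zero_add hsumc]
  congr 1
  · simp [Complex.cpow_neg, one_div]
  · rw [← hswap, ← tsum_mul_left]
    refine tsum_congr fun k => ?_
    have : (2 * (π:ℂ) * I * ((k:ℕ) + 1 : ℕ) * α) = 2 * π * I * α + 2 * π * I * (k:ℂ) * α := by
      push_cast; ring
    rw [this, Complex.exp_add, div_eq_mul_inv, ← Complex.cpow_neg]
    push_cast
    ring
end

section
/- For Re(s) > 1 and real α, real c > 0, the partial derivative in c of the Lerch zeta function satisfies ∂/∂c [Σ_{n≥0} e^{2πinα}(n+c)^{-s}] = -s · Σ_{n≥0} e^{2πinα}(n+c)^{-s-1}, i.e., ∂ζ(α,c,s)/∂c = -s·ζ(α,c,s+1). -/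
/-!
Each term `a n / (n + x) ^ s` has derivative `-s * a n / (n + x) ^ (s + 1)` in `x`. On a
half-line `x > c'` with `c' > 0` these derivatives are bounded, uniformly in `x`, by
`‖s‖ * C * (n + c') ^ (-(Re s + 1))`, which is summable, so the series may be differentiated
termwise.
-/

open Complex Real

lemma Real.summable_nat_add_rpow_neg {a p : ℝ} (ha : 0 < a) (hp : 1 < p) :
    Summable fun n : ℕ => ((n : ℝ) + a) ^ (-p) :=
  ((Real.summable_one_div_nat_add_rpow a p).mpr hp).congr fun n => by
    rw [abs_of_pos (by positivity), one_div, ← Real.rpow_neg (by positivity)]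

lemma Complex.norm_exp_two_pi_I_mul_natCast_mul (n : ℕ) (α : ℝ) :
    ‖Complex.exp (2 * π * I * n * α)‖ = 1 := by
  rw [show 2 * (π : ℂ) * I * n * α = ((2 * π * n * α : ℝ) : ℂ) * I by push_cast; ring]
  exact Complex.norm_exp_ofReal_mul_I _

lemma Complex.norm_natCast_add_ofReal_cpow {n : ℕ} {x : ℝ} (hx : 0 < (n : ℝ) + x) (s : ℂ) :
    ‖((n : ℂ) + x) ^ s‖ = ((n : ℝ) + x) ^ s.re := by
  rw [← Complex.norm_cpow_eq_rpow_re_of_pos hx]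
  push_cast
  rfl

lemma norm_div_natCast_add_cpow_le {a : ℂ} {C : ℝ} (ha : ‖a‖ ≤ C) {s : ℂ} (hs : 0 ≤ s.re)
    (n : ℕ) {c x : ℝ} (hc : 0 < c) (hcx : c ≤ x) :
    ‖a / ((n : ℂ) + x) ^ s‖ ≤ C * ((n : ℝ) + c) ^ (-s.re) := by
  have hnc : 0 < (n : ℝ) + c := by positivity
  have hnx : 0 < (n : ℝ) + x := by linarith
  rw [norm_div, Complex.norm_natCast_add_ofReal_cpow hnx, div_eq_mul_inv,
    ← Real.rpow_neg hnx.le]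
  exact mul_le_mul ha (Real.rpow_le_rpow_of_nonpos hnc (by linarith) (neg_nonpos.mpr hs))
    (by positivity) ((norm_nonneg a).trans ha)

lemma hasDerivAt_div_natCast_add_cpow (a s : ℂ) (n : ℕ) {x : ℝ} (hx : 0 < (n : ℝ) + x) :
    HasDerivAt (fun y : ℝ => a / ((n : ℂ) + y) ^ s) (-s * (a / ((n : ℂ) + x) ^ (s + 1))) x := by
  have hslit : (n : ℂ) + x ∈ Complex.slitPlane := Or.inl (by simpa using hx)
  have hpow : HasDerivAt (fun z : ℂ => ((n : ℂ) + z) ^ (-s))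
      (-s * ((n : ℂ) + x) ^ (-s - 1)) (x : ℂ) := by
    simpa using ((hasDerivAt_id (x : ℂ)).const_add (n : ℂ)).cpow_const (c := -s) hslit
  have hfun : (fun y : ℝ => a / ((n : ℂ) + y) ^ s) = fun y : ℝ => a * ((n : ℂ) + y) ^ (-s) := by
    funext y
    rw [Complex.cpow_neg, div_eq_mul_inv]
  rw [hfun]
  refine ((hpow.comp_ofReal).const_mul a).congr_deriv ?_
  rw [show -s - 1 = -(s + 1) by ring, Complex.cpow_neg]
  ring

theorem hasDerivAt_tsum_div_natCast_add_cpow {a : ℕ → ℂ} {C : ℝ} (ha : ∀ n, ‖a n‖ ≤ C)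
    {s : ℂ} (hs : 1 < s.re) {c : ℝ} (hc : 0 < c) :
    HasDerivAt (fun x : ℝ => ∑' n : ℕ, a n / ((n : ℂ) + x) ^ s)
      (-s * ∑' n : ℕ, a n / ((n : ℂ) + c) ^ (s + 1)) c := by
  have hc2 : 0 < c / 2 := by positivity
  have hc_mem : c ∈ Set.Ioi (c / 2) := half_lt_self hc
  have hs1 : 1 < (s + 1).re := by
    rw [Complex.add_re, Complex.one_re]
    linarith
  have hderiv_bound : ∀ n (x : ℝ), x ∈ Set.Ioi (c / 2) →
      ‖-s * (a n / ((n : ℂ) + x) ^ (s + 1))‖ ≤ ‖s‖ * (C * ((n : ℝ) + c / 2) ^ (-(s + 1).re)) :=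
    fun n x hx => by
      rw [norm_mul, norm_neg]
      gcongr
      exact norm_div_natCast_add_cpow_le (ha n) (by linarith) n hc2 (le_of_lt hx)
  have hsummable_bound : Summable fun n : ℕ => ‖s‖ * (C * ((n : ℝ) + c / 2) ^ (-(s + 1).re)) :=
    ((Real.summable_nat_add_rpow_neg hc2 (by linarith)).mul_left C).mul_left ‖s‖
  have hsummable_at_c : Summable fun n : ℕ => a n / ((n : ℂ) + c) ^ s :=
    .of_norm_bounded ((Real.summable_nat_add_rpow_neg hc hs).mul_left C)
      fun n => norm_div_natCast_add_cpow_le (ha n) (by linarith) n hc le_rfl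
  rw [← tsum_mul_left]
  exact hasDerivAt_tsum_of_isPreconnected hsummable_bound isOpen_Ioi isPreconnected_Ioi
    (fun n x hx => hasDerivAt_div_natCast_add_cpow (a n) s n
      (add_pos_of_nonneg_of_pos n.cast_nonneg (hc2.trans hx)))
    hderiv_bound hc_mem hsummable_at_c hc_mem

/-- For `Re s > 1` and `c > 0`, the Lerch zeta series is differentiable in `c` with
`∂ζ(α,c,s)/∂c = -s·ζ(α,c,s+1)`. -/
theorem lerchZeta_hasDerivAt_c (α : ℝ) (s : ℂ) (hs : 1 < s.re) (c : ℝ) (hc : 0 < c) :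
    HasDerivAt (fun x : ℝ => ∑' n : ℕ, Complex.exp (2 * π * I * n * α) / ((n : ℂ) + x) ^ s)
      (-s * ∑' n : ℕ, Complex.exp (2 * π * I * n * α) / ((n : ℂ) + c) ^ (s + 1)) c :=
  hasDerivAt_tsum_div_natCast_add_cpow
    (fun n => (Complex.norm_exp_two_pi_I_mul_natCast_mul n α).le) hs hc
end

section
/- Let ψ be a non-principal Dirichlet character modulo ℓ. For all real α ∈ [-1/2, 1/2] and t ∈ (0,1), the bound |Σ_{b=1}^{ℓ} ψ(b) e^{2πibα} e^{-bt/ℓ}| ≪_ℓ |α| + t holds; consequently the function t ↦ (Σ_{b=1}^{ℓ} ψ(b)e^{2πibα}e^{-bt/ℓ}) · t^{s-1}/(1 - e^{2πiα}e^{-t}) is bounded by a constant (depending on ℓ, s) times t^{Re(s)-1} for 0 < t < 1, for any s with Re(s) > 0. -/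
open Complex Real Finset


-- |e^{ix} - 1| ≤ |x|
lemma my_norm_exp_mul_I_sub_one_le (x : ℝ) : ‖Complex.exp (x * I) - 1‖ ≤ |x| := by
  have h2 : ‖Complex.exp (x * I) - 1‖ ^ 2 = 2 - 2 * Real.cos x := by
    rw [Complex.sq_norm, Complex.normSq_apply]
    simp only [Complex.sub_re, Complex.sub_im, Complex.one_re, Complex.one_im,
      Complex.exp_ofReal_mul_I_re, Complex.exp_ofReal_mul_I_im]
    nlinarith [Real.sin_sq_add_cos_sq x]
  have h3 : 2 - 2 * Real.cos x ≤ x ^ 2 := by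
    have := Real.sin_sq_le_sq (x := x / 2)
    have hc : Real.cos x = 1 - 2 * Real.sin (x / 2) ^ 2 := by
      have := Real.cos_sq (x / 2)
      rw [show 2 * (x/2) = x by ring] at this
      have h2 := Real.sin_sq_add_cos_sq (x / 2)
      nlinarith
    nlinarith
  nlinarith [norm_nonneg (Complex.exp (x * I) - 1), abs_nonneg x, _root_.sq_abs x]

-- lower bound for the denominator
set_option maxHeartbeats 800000 in
lemma my_denom_lb {α t : ℝ} (hα : α ∈ Set.Icc (-(1/2) : ℝ) (1/2)) (ht : t ∈ Set.Ioo (0 : ℝ) 1) :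
    (|α| + t) / 4 ≤ ‖1 - Complex.exp (2 * π * I * α) * Real.exp (-t)‖ := by
  obtain ⟨hα1, hα2⟩ := hα
  obtain ⟨ht0, ht1⟩ := ht
  have habs : |α| ≤ 1/2 := abs_le.2 ⟨by linarith, hα2⟩
  set w : ℂ := 1 - Complex.exp (2 * π * I * α) * Real.exp (-t) with hw
  have hE : (2 * π * I * α : ℂ) = ((2 * π * α : ℝ) : ℂ) * I := by push_cast; ring
  have hre : w.re = 1 - Real.cos (2 * π * α) * Real.exp (-t) := by
    rw [hw, hE, Complex.sub_re, Complex.one_re, Complex.mul_re,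
      Complex.exp_ofReal_mul_I_re, Complex.exp_ofReal_mul_I_im,
      Complex.ofReal_re, Complex.ofReal_im]
    ring
  have him : w.im = -(Real.sin (2 * π * α) * Real.exp (-t)) := by
    rw [hw, hE, Complex.sub_im, Complex.one_im, Complex.mul_im,
      Complex.exp_ofReal_mul_I_re, Complex.exp_ofReal_mul_I_im,
      Complex.ofReal_re, Complex.ofReal_im]
    ring
  have hwre : |w.re| ≤ ‖w‖ := Complex.abs_re_le_norm w
  have hwim : |w.im| ≤ ‖w‖ := Complex.abs_im_le_norm w
  clear_value w
  have hπ := Real.pi_gt_three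
  have het : Real.exp (-t) ≤ 1 := by
    rw [Real.exp_le_one_iff]; linarith
  have het0 : 0 < Real.exp (-t) := Real.exp_pos _
  -- ‖w‖ ≥ t/2 always
  have h1 : 1 - Real.exp (-t) ≥ t / 2 := by
    have h := Real.add_one_le_exp t
    have hmul : Real.exp (-t) * Real.exp t = 1 := by
      rw [← Real.exp_add]; simp
    nlinarith [mul_le_mul_of_nonneg_left h het0.le]
  by_cases hc : |α| ≤ 1/4
  · -- small α: use both real and imaginary parts
    have hcos : Real.cos (2 * π * α) ≤ 1 := Real.cos_le_one _
    have hret : t / 2 ≤ |w.re| := by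
      rw [hre]
      have : Real.cos (2 * π * α) * Real.exp (-t) ≤ Real.exp (-t) := by nlinarith
      rw [_root_.abs_of_nonneg (by nlinarith)]
      nlinarith
    have hsin : 4 * |α| ≤ |Real.sin (2 * π * α)| := by
      have h0 : |Real.sin (2 * π * α)| = Real.sin (2 * π * |α|) := by
        rcases abs_cases α with ⟨h, _⟩ | ⟨h, hneg⟩
        · rw [h, _root_.abs_of_nonneg]
          apply Real.sin_nonneg_of_nonneg_of_le_pi
          · positivity
          · nlinarith
        · rw [h, show 2 * π * -α = -(2 * π * α) by ring, Real.sin_neg]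
          rw [_root_.abs_of_nonpos]
          rw [show 2 * π * α = -(2 * π * -α) by ring, Real.sin_neg, neg_nonpos]
          apply Real.sin_nonneg_of_nonneg_of_le_pi
          · nlinarith
          · nlinarith
      rw [h0]
      have := Real.mul_le_sin (x := 2 * π * |α|) (by positivity) (by nlinarith)
      have hπ0 : (0:ℝ) < π := by linarith
      calc 4 * |α| = 2 / π * (2 * π * |α|) := by field_simp; ring
        _ ≤ Real.sin (2 * π * |α|) := this
    have hime : |α| ≤ |w.im| := by
      rw [him, _root_.abs_neg, _root_.abs_mul, _root_.abs_of_nonneg het0.le]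
      have hee : Real.exp (-1) ≤ Real.exp (-t) := by
        apply Real.exp_le_exp.2; linarith
      have h4 : (1:ℝ)/3 ≤ Real.exp (-1) := by
        have h9 : Real.exp 1 ≤ 3 := by
          have := Real.exp_one_lt_d9.le; norm_num at this ⊢; linarith
        calc (1:ℝ)/3 = 3⁻¹ := one_div 3
          _ ≤ (Real.exp 1)⁻¹ := by
              apply inv_anti₀ (Real.exp_pos 1) h9
          _ = Real.exp (-1) := (Real.exp_neg 1).symm
      nlinarith [abs_nonneg α, abs_nonneg (Real.sin (2 * π * α))]
    linarith [le_trans hret hwre, le_trans hime hwim]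
  · -- large α: real part ≥ 1
    push_neg at hc
    have hcos : Real.cos (2 * π * α) ≤ 0 := by
      have : Real.cos (2 * π * α) = Real.cos (2 * π * |α|) := by
        rcases abs_cases α with ⟨h, _⟩ | ⟨h, _⟩
        · rw [h]
        · rw [h, show 2 * π * -α = -(2 * π * α) by ring, Real.cos_neg]
      rw [this]
      apply Real.cos_nonpos_of_pi_div_two_le_of_le
      · nlinarith
      · nlinarith
    have : (1:ℝ) ≤ |w.re| := by
      rw [hre, _root_.abs_of_nonneg (by nlinarith)]
      nlinarith
    have := le_trans this hwre
    linarith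

lemma my_char_sum_zero (ℓ : ℕ) [NeZero ℓ] (ψ : DirichletCharacter ℂ ℓ) (hψ : ψ ≠ 1) :
    ∑ b ∈ Finset.Icc 1 ℓ, ψ (b : ZMod ℓ) = 0 := by
  have hL : 0 < ℓ := Nat.pos_of_ne_zero (NeZero.ne ℓ)
  have h1 : ∑ b ∈ Finset.Icc 1 ℓ, ψ (b : ZMod ℓ)
      = ∑ b ∈ Finset.range ℓ, ψ (b : ZMod ℓ) := by
    rw [← Finset.Ico_add_one_right_eq_Icc, Finset.sum_Ico_succ_top hL, Finset.range_eq_Ico,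
      Finset.sum_eq_sum_Ico_succ_bot hL]
    simp [ZMod.natCast_self]
    ring
  have h2 : ∑ b ∈ Finset.range ℓ, ψ (b : ZMod ℓ) = ∑ a : ZMod ℓ, ψ a := by
    refine Finset.sum_nbij' (fun b => (b : ZMod ℓ)) (fun a => a.val) ?_ ?_ ?_ ?_ ?_
    · intro b _; exact Finset.mem_univ _
    · intro a _; exact Finset.mem_range.2 a.val_lt
    · intro b hb; exact ZMod.val_cast_of_lt (Finset.mem_range.1 hb)
    · intro a _; exact ZMod.natCast_zmod_val a
    · intro b _; rfl
  rw [h1, h2]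
  exact MulChar.sum_eq_zero_of_ne_one hψ

lemma my_sum_bound (ℓ : ℕ) [NeZero ℓ] (ψ : DirichletCharacter ℂ ℓ) (hψ : ψ ≠ 1)
    {α t : ℝ} (hα : α ∈ Set.Icc (-(1/2) : ℝ) (1/2)) (ht : t ∈ Set.Ioo (0 : ℝ) 1) :
    ‖∑ b ∈ Finset.Icc 1 ℓ, ψ (b : ZMod ℓ) * Complex.exp (2 * π * I * b * α) *
        Real.exp (-(b * t) / ℓ)‖ ≤ (2 * π * ℓ ^ 2 + ℓ) * (|α| + t) := by
  obtain ⟨ht0, ht1⟩ := ht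
  have hL : 0 < ℓ := Nat.pos_of_ne_zero (NeZero.ne ℓ)
  have hLR : (0:ℝ) < ℓ := by exact_mod_cast hL
  have hπ := Real.pi_pos
  set f : ℕ → ℂ := fun b =>
    Complex.exp (2 * π * I * b * α) * (Real.exp (-(b * t) / ℓ) : ℂ) with hf
  have hterm : ∀ b ∈ Finset.Icc 1 ℓ,
      ψ (b : ZMod ℓ) * Complex.exp (2 * π * I * b * α) * Real.exp (-(b * t) / ℓ)
        = ψ (b : ZMod ℓ) * (f b - 1) + ψ (b : ZMod ℓ) := by
    intro b _; rw [hf]; ring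
  rw [Finset.sum_congr rfl hterm, Finset.sum_add_distrib,
    my_char_sum_zero ℓ ψ hψ, add_zero]
  have hbound : ∀ b ∈ Finset.Icc 1 ℓ,
      ‖ψ (b : ZMod ℓ) * (f b - 1)‖ ≤ 2 * π * ℓ * |α| + t := by
    intro b hb
    obtain ⟨hb1, hb2⟩ := Finset.mem_Icc.1 hb
    have hbR : (b : ℝ) ≤ ℓ := by exact_mod_cast hb2
    have hbR0 : (0:ℝ) ≤ b := Nat.cast_nonneg b
    set r : ℝ := Real.exp (-(b * t) / ℓ) with hr
    have hr0 : 0 < r := Real.exp_pos _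
    have hx0 : (0:ℝ) ≤ (b * t) / ℓ := by positivity
    have hr1 : r ≤ 1 := by
      rw [hr, Real.exp_le_one_iff, show -(↑b * t) / (↑ℓ:ℝ) = -((↑b * t) / ↑ℓ) by ring]
      exact neg_nonpos.2 hx0
    have hr2 : 1 - r ≤ (b * t) / ℓ := by
      have := Real.add_one_le_exp (-((b * t) / ℓ))
      rw [hr]
      rw [show -(↑b * t) / ↑ℓ = -((↑b * t) / ↑ℓ) by ring]
      linarith
    have hE : (2 * π * I * b * α : ℂ) = ((2 * π * b * α : ℝ) : ℂ) * I := by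
      push_cast; ring
    have hsplit : f b - 1 = (Complex.exp (((2 * π * b * α : ℝ) : ℂ) * I) - 1) * (r : ℂ)
        + ((r : ℂ) - 1) := by
      simp only [hf]; rw [hE, ← hr]; ring
    have h1 : ‖f b - 1‖ ≤ 2 * π * b * |α| + (b * t) / ℓ := by
      rw [hsplit]
      calc ‖(Complex.exp (((2 * π * b * α : ℝ) : ℂ) * I) - 1) * (r : ℂ) + ((r : ℂ) - 1)‖
          ≤ ‖Complex.exp (((2 * π * b * α : ℝ) : ℂ) * I) - 1‖ * ‖(r : ℂ)‖ + ‖((r : ℂ) - 1)‖ := by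
            refine le_trans (norm_add_le _ _) ?_
            rw [norm_mul]
        _ ≤ |2 * π * b * α| * 1 + ((b * t) / ℓ) := by
            gcongr
            · exact my_norm_exp_mul_I_sub_one_le _
            · rw [Complex.norm_real, Real.norm_eq_abs, _root_.abs_of_nonneg hr0.le]
              exact hr1
            · rw [show ((r : ℂ) - 1) = ((r - 1 : ℝ) : ℂ) by push_cast; ring,
                Complex.norm_real, Real.norm_eq_abs, _root_.abs_of_nonpos (by linarith)]
              linarith
        _ = 2 * π * b * |α| + (b * t) / ℓ := by
            rw [mul_one, _root_.abs_mul, _root_.abs_of_nonneg (by positivity : (0:ℝ) ≤ 2 * π * b)]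
    calc ‖ψ (b : ZMod ℓ) * (f b - 1)‖ = ‖ψ (b : ZMod ℓ)‖ * ‖f b - 1‖ := norm_mul _ _
      _ ≤ 1 * (2 * π * b * |α| + (b * t) / ℓ) :=
          mul_le_mul (ψ.norm_le_one _) h1 (norm_nonneg _) zero_le_one
      _ ≤ 2 * π * ℓ * |α| + t := by
          rw [one_mul]
          have hbt : (b : ℝ) * t / ℓ ≤ t := by
            rw [div_le_iff₀ hLR]; nlinarith
          have h3 : 0 ≤ 2 * π * ((ℓ:ℝ) - b) * |α| :=
            mul_nonneg (mul_nonneg (by positivity) (by linarith)) (abs_nonneg α)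
          nlinarith
  calc ‖∑ b ∈ Finset.Icc 1 ℓ, ψ (b : ZMod ℓ) * (f b - 1)‖
      ≤ ∑ b ∈ Finset.Icc 1 ℓ, ‖ψ (b : ZMod ℓ) * (f b - 1)‖ := norm_sum_le _ _
    _ ≤ ∑ _b ∈ Finset.Icc 1 ℓ, (2 * π * ℓ * |α| + t) := Finset.sum_le_sum hbound
    _ = ℓ * (2 * π * ℓ * |α| + t) := by
        rw [Finset.sum_const, Nat.card_Icc]
        simp only [nsmul_eq_mul, Nat.add_sub_cancel]
    _ ≤ (2 * π * ℓ ^ 2 + ℓ) * (|α| + t) := by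
        have e1 : 0 ≤ 2 * π * (ℓ:ℝ) ^ 2 * t := by positivity
        have e2 : 0 ≤ (ℓ:ℝ) * |α| := by positivity
        nlinarith

/-- For a non-principal Dirichlet character `ψ mod ℓ`, the character sum
`Σ_{b=1}^{ℓ} ψ(b) e(bα) e^{-bt/ℓ}` is `O_ℓ(|α| + t)` on `α ∈ [-1/2,1/2]`, `t ∈ (0,1)`;
consequently the integrand of the twisted periodic zeta integral is `O_{ℓ,s}(t^{Re s - 1})`. -/
theorem twisted_periodic_integrand_bound (ℓ : ℕ) [NeZero ℓ]
    (ψ : DirichletCharacter ℂ ℓ) (hψ : ψ ≠ 1) :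
    (∃ C : ℝ, 0 < C ∧ ∀ α ∈ Set.Icc (-(1/2) : ℝ) (1/2), ∀ t ∈ Set.Ioo (0 : ℝ) 1,
      ‖∑ b ∈ Finset.Icc 1 ℓ, ψ (b : ZMod ℓ) * Complex.exp (2 * π * I * b * α) *
          Real.exp (-(b * t) / ℓ)‖ ≤ C * (|α| + t)) ∧
    ∀ s : ℂ, 0 < s.re → ∃ C' : ℝ, 0 < C' ∧
      ∀ α ∈ Set.Icc (-(1/2) : ℝ) (1/2), ∀ t ∈ Set.Ioo (0 : ℝ) 1,
        ‖(∑ b ∈ Finset.Icc 1 ℓ, ψ (b : ZMod ℓ) * Complex.exp (2 * π * I * b * α) *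
              Real.exp (-(b * t) / ℓ)) *
            (t : ℂ) ^ (s - 1) / (1 - Complex.exp (2 * π * I * α) * Real.exp (-t))‖
          ≤ C' * t ^ (s.re - 1) := by
  have hπ := Real.pi_pos
  have hLR : (0:ℝ) < ℓ := by exact_mod_cast Nat.pos_of_ne_zero (NeZero.ne ℓ)
  have hC0 : (0:ℝ) < 2 * π * ℓ ^ 2 + ℓ := by positivity
  constructor
  · exact ⟨2 * π * ℓ ^ 2 + ℓ, hC0, fun α hα t ht => my_sum_bound ℓ ψ hψ hα ht⟩
  · intro s _hs
    refine ⟨4 * (2 * π * ℓ ^ 2 + ℓ), by positivity, ?_⟩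
    intro α hα t ht
    have hS := my_sum_bound ℓ ψ hψ hα ht
    have hD := my_denom_lb hα ht
    have ht0 := ht.1
    have hαt : 0 < |α| + t := add_pos_of_nonneg_of_pos (abs_nonneg α) ht0
    have hDpos : 0 < ‖1 - Complex.exp (2 * π * I * α) * Real.exp (-t)‖ :=
      lt_of_lt_of_le (by positivity) hD
    have hpow : ‖(t : ℂ) ^ (s - 1)‖ = t ^ (s.re - 1) := by
      rw [Complex.norm_cpow_eq_rpow_re_of_pos ht0, Complex.sub_re,
        Complex.one_re]
    have hpow0 : (0:ℝ) ≤ t ^ (s.re - 1) := Real.rpow_nonneg ht0.le _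
    rw [norm_div, norm_mul, hpow]
    calc ‖∑ b ∈ Finset.Icc 1 ℓ, ψ (b : ZMod ℓ) * Complex.exp (2 * π * I * b * α) *
            Real.exp (-(b * t) / ℓ)‖ * t ^ (s.re - 1) /
          ‖1 - Complex.exp (2 * π * I * α) * Real.exp (-t)‖
        ≤ (2 * π * ℓ ^ 2 + ℓ) * (|α| + t) * t ^ (s.re - 1) / ((|α| + t) / 4) :=
          div_le_div₀ (by positivity) (mul_le_mul_of_nonneg_right hS hpow0)
            (by positivity) hD
      _ = 4 * (2 * π * ℓ ^ 2 + ℓ) * t ^ (s.re - 1) := by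
          field_simp
end
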